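/- Define g(m) := ∫_{−π/4}^{5π/4} (1 − 2 sin²θ)(1 − m sin²θ)^{−1/2} dθ for m ∈ (0,1). Then g is strictly decreasing on (0,1), and there exists a unique m_H ∈ (0,1) with g(m_H) = 0. -/

import Mathlib

open Real MeasureTheory Set

noncomputable section

/-- `g(m) = ∫_{−π/4}^{5π/4} (1 − 2 sin²θ)(1 − m sin²θ)^{−1/2} dθ`; its unique zero is `m_H`. -/
def gH (m : ℝ) : ℝ :=
  ∫ θ in (-(Real.pi / 4))..(5 * Real.pi / 4),
    (1 - 2 * Real.sin θ ^ 2) / Real.sqrt (1 - m * Real.sin θ ^ 2)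

/-!
Write `φ x = (1 - x)^(-1/2)`. The symmetries `θ ↦ -θ`, `π/2 - θ`, `π - θ` of `sin²` fold the
integral onto `[0, π/4]`: `g(m) = 4 ∫ cos 2θ φ(m sin²θ) - 2 ∫ cos 2θ φ(m cos²θ)`.

For `m₁ < m₂` put `Δ s = φ(m₂ s) - φ(m₁ s)`; it is increasing, `Δ 0 = 0` and `2 Δ s ≤ Δ (2 s)`.
Then `g(m₁) - g(m₂) = 2 ∫₀^{π/4} cos 2θ ψ(θ)` with `ψ = Δ(cos²) - 2 Δ(sin²)` decreasing.
Its plain integral is positive, since `cos²(π/4 - θ) = sin²(θ + π/4) > 2 sin²θ`, and if `θ₀` is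
the zero of `ψ`, then `(cos 2θ - cos 2θ₀) ψ(θ) ≥ 0`, so the weighted integral is at least
`cos 2θ₀ ∫ ψ > 0`.

For the zero: `g(1/2) ≥ 2 - √2 > 0`. At `m = 1 - δ²` the `cos²`-integral blows up like
`½ log(1 + 1/(2δ))` near `θ = 0`, which gives `g(0.9999) ≤ 2√2 - log 51 < 0`.
-/

section Integrals

theorem integral_comp_sin_sq_eq {f : ℝ → ℝ} (hf : Continuous fun θ => f (sin θ ^ 2)) :
    ∫ θ in -(π / 4)..5 * π / 4, f (sin θ ^ 2) =
      4 * (∫ θ in 0..π / 4, f (sin θ ^ 2)) + 2 * ∫ θ in 0..π / 4, f (cos θ ^ 2) := by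
  have hi : ∀ a b : ℝ, IntervalIntegrable (fun θ => f (sin θ ^ 2)) volume a b :=
    fun a b => hf.intervalIntegrable a b
  have h_neg : ∫ θ in -(π / 4)..0, f (sin θ ^ 2) = ∫ θ in 0..π / 4, f (sin θ ^ 2) := by
    have := intervalIntegral.integral_comp_neg (a := 0) (b := π / 4) fun θ => f (sin θ ^ 2)
    simp only [sin_neg, neg_sq, neg_zero] at this
    exact this.symm
  have h_half : ∫ θ in π / 4..π / 2, f (sin θ ^ 2) = ∫ θ in 0..π / 4, f (cos θ ^ 2) := by
    have := intervalIntegral.integral_comp_sub_left (a := 0) (b := π / 4)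
      (fun θ => f (sin θ ^ 2)) (π / 2)
    simp only [sin_pi_div_two_sub, sub_zero] at this
    rw [this, show π / 2 - π / 4 = π / 4 by ring]
  have h_pi : ∫ θ in π / 2..5 * π / 4, f (sin θ ^ 2) = ∫ θ in -(π / 4)..π / 2, f (sin θ ^ 2) := by
    have := intervalIntegral.integral_comp_sub_left (a := -(π / 4)) (b := π / 2)
      (fun θ => f (sin θ ^ 2)) π
    simp only [sin_pi_sub] at this
    rw [this]; congr 1 <;> ring
  have s₁ := intervalIntegral.integral_add_adjacent_intervals (hi (-(π / 4)) (π / 2))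
    (hi _ (5 * π / 4))
  have s₂ := intervalIntegral.integral_add_adjacent_intervals (hi (-(π / 4)) 0) (hi _ (π / 2))
  have s₃ := intervalIntegral.integral_add_adjacent_intervals (hi 0 (π / 4)) (hi _ (π / 2))
  linarith

theorem two_mul_sin_sq_lt_sin_add_pi_div_four_sq {x : ℝ} (hx₀ : 0 < x) (hx₁ : x < π / 4) :
    2 * sin x ^ 2 < sin (x + π / 4) ^ 2 := by
  have h₁ : sin (x + π / 4) ^ 2 = (1 + sin (2 * x)) / 2 := by
    rw [sin_sq, cos_sq, show 2 * (x + π / 4) = 2 * x + π / 2 by ring, cos_add_pi_div_two]; ring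
  have h₂ : 2 * sin x ^ 2 = 1 - cos (2 * x) := by rw [cos_two_mul, cos_sq']; ring
  have hs : 0 < sin (2 * x) := sin_pos_of_pos_of_lt_pi (by linarith) (by linarith [pi_pos])
  have hc : 0 < cos (2 * x) := cos_pos_of_mem_Ioo ⟨by linarith [pi_pos], by linarith⟩
  rw [h₁, h₂]
  nlinarith [sin_sq_add_cos_sq (2 * x), mul_pos hs hc, sin_le_one (2 * x), cos_le_one (2 * x)]

theorem cos_two_mul_nonneg {θ : ℝ} (hθ : θ ∈ Icc 0 (π / 4)) : 0 ≤ cos (2 * θ) :=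
  cos_nonneg_of_mem_Icc ⟨by linarith [hθ.1, pi_pos], by linarith [hθ.2]⟩

theorem sin_sq_le_half {θ : ℝ} (hθ : θ ∈ Icc 0 (π / 4)) : sin θ ^ 2 ≤ 1 / 2 := by
  have := cos_two_mul_nonneg hθ
  rw [cos_two_mul_eq_one_sub] at this
  linarith

theorem integral_cos_two_mul : ∫ θ in 0..π / 4, cos (2 * θ) = 1 / 2 := by
  rw [intervalIntegral.integral_comp_mul_left (fun θ => cos θ) two_ne_zero, integral_cos,
    show 2 * (π / 4) = π / 2 by ring, sin_pi_div_two]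
  norm_num

theorem intervalIntegrable_cos_two_mul_mul {u : ℝ → ℝ} (hu : Continuous u) (a b : ℝ) :
    IntervalIntegrable (fun θ => cos (2 * θ) * u θ) volume a b :=
  ((continuous_cos.comp (continuous_const.mul continuous_id)).mul hu).intervalIntegrable a b

theorem integral_cos_two_mul_mul_le {u : ℝ → ℝ} {c : ℝ}
    (hu : IntervalIntegrable (fun θ => cos (2 * θ) * u θ) volume 0 (π / 4))
    (hle : ∀ θ ∈ Icc 0 (π / 4), u θ ≤ c) : ∫ θ in 0..π / 4, cos (2 * θ) * u θ ≤ c / 2 := by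
  calc ∫ θ in 0..π / 4, cos (2 * θ) * u θ ≤ ∫ θ in 0..π / 4, cos (2 * θ) * c :=
        intervalIntegral.integral_mono_on (by positivity) hu
          (intervalIntegrable_cos_two_mul_mul continuous_const _ _)
          fun θ hθ => mul_le_mul_of_nonneg_left (hle θ hθ) (cos_two_mul_nonneg hθ)
    _ = c / 2 := by rw [intervalIntegral.integral_mul_const, integral_cos_two_mul]; ring

theorem le_integral_cos_two_mul_mul {u : ℝ → ℝ} {c : ℝ}
    (hu : IntervalIntegrable (fun θ => cos (2 * θ) * u θ) volume 0 (π / 4))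
    (hle : ∀ θ ∈ Icc 0 (π / 4), c ≤ u θ) : c / 2 ≤ ∫ θ in 0..π / 4, cos (2 * θ) * u θ := by
  calc c / 2 = ∫ θ in 0..π / 4, cos (2 * θ) * c := by
        rw [intervalIntegral.integral_mul_const, integral_cos_two_mul]; ring
    _ ≤ ∫ θ in 0..π / 4, cos (2 * θ) * u θ :=
        intervalIntegral.integral_mono_on (by positivity)
          (intervalIntegrable_cos_two_mul_mul continuous_const _ _) hu
          fun θ hθ => mul_le_mul_of_nonneg_left (hle θ hθ) (cos_two_mul_nonneg hθ)

theorem continuousOn_cos_div_sin_add {δ : ℝ} (hδ : 0 < δ) :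
    ContinuousOn (fun θ => cos θ / (sin θ + δ)) (Icc 0 π) :=
  continuousOn_cos.div (continuousOn_sin.add continuousOn_const) fun _ hθ =>
    (add_pos_of_nonneg_of_pos (sin_nonneg_of_nonneg_of_le_pi hθ.1 hθ.2) hδ).ne'

theorem integral_cos_div_sin_add {δ : ℝ} (hδ : 0 < δ) :
    ∫ θ in 0..π / 6, cos θ / (sin θ + δ) = log (1 / 2 + δ) - log δ := by
  have hIcc : Icc 0 (π / 6) ⊆ Icc 0 π := Icc_subset_Icc_right (by linarith [pi_pos])
  rw [intervalIntegral.integral_eq_sub_of_hasDerivAt (f := fun θ => log (sin θ + δ))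
    (fun θ hθ => ((hasDerivAt_sin θ).add_const δ).log (by
      rw [uIcc_of_le (by positivity)] at hθ
      linarith [sin_nonneg_of_nonneg_of_le_pi (hIcc hθ).1 (hIcc hθ).2]))
    (((continuousOn_cos_div_sin_add hδ).mono hIcc).intervalIntegrable_of_Icc (by positivity))]
  simp

theorem mul_integral_le_integral_mul_of_antitoneOn {w ψ : ℝ → ℝ} {a b c : ℝ}
    (hc : c ∈ Icc a b) (hw : AntitoneOn w (Icc a b)) (hψ : AntitoneOn ψ (Icc a b))
    (hψc : ψ c = 0) (hψi : IntervalIntegrable ψ volume a b)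
    (hwψi : IntervalIntegrable (fun x => w x * ψ x) volume a b) :
    w c * ∫ x in a..b, ψ x ≤ ∫ x in a..b, w x * ψ x := by
  rw [← intervalIntegral.integral_const_mul]
  refine intervalIntegral.integral_mono_on (hc.1.trans hc.2) (hψi.const_mul _) hwψi fun x hx => ?_
  rcases le_total x c with hxc | hcx
  · nlinarith [hw hx hc hxc, hψ hx hc hxc]
  · nlinarith [hw hc hx hcx, hψ hc hx hcx]

end Integrals

section Weighted

variable {Δ : ℝ → ℝ}

theorem continuous_comp_sin_sq (hc : ContinuousOn Δ (Icc 0 1)) :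
    Continuous fun θ => Δ (sin θ ^ 2) :=
  hc.comp_continuous (by fun_prop) fun θ => ⟨sq_nonneg _, sin_sq_le_one θ⟩

theorem continuous_comp_cos_sq (hc : ContinuousOn Δ (Icc 0 1)) :
    Continuous fun θ => Δ (cos θ ^ 2) :=
  hc.comp_continuous (by fun_prop) fun θ => ⟨sq_nonneg _, cos_sq_le_one θ⟩

theorem integral_comp_cos_sq_sub_two_mul_pos (hc : ContinuousOn Δ (Icc 0 1))
    (hmono : StrictMonoOn Δ (Icc 0 1))
    (hsup : ∀ s ∈ Icc (0 : ℝ) (1 / 2), 2 * Δ s ≤ Δ (2 * s)) :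
    0 < ∫ θ in 0..π / 4, (Δ (cos θ ^ 2) - 2 * Δ (sin θ ^ 2)) := by
  have hS := continuous_comp_sin_sq hc
  have hS' : Continuous fun θ => Δ (sin (θ + π / 4) ^ 2) := hS.comp (by fun_prop)
  have h_refl : ∫ θ in 0..π / 4, Δ (cos θ ^ 2) = ∫ θ in 0..π / 4, Δ (sin (θ + π / 4) ^ 2) := by
    have := intervalIntegral.integral_comp_sub_left (a := 0) (b := π / 4)
      (fun θ => Δ (cos θ ^ 2)) (π / 4)
    rw [sub_self, sub_zero] at this
    rw [← this]
    congr! 4 with θ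
    rw [← sin_pi_div_two_sub]; ring_nf
  rw [intervalIntegral.integral_sub ((continuous_comp_cos_sq hc).intervalIntegrable _ _)
      ((hS.const_mul 2).intervalIntegrable _ _), h_refl,
    ← intervalIntegral.integral_sub (hS'.intervalIntegrable _ _)
      ((hS.const_mul 2).intervalIntegrable _ _)]
  refine intervalIntegral.intervalIntegral_pos_of_pos_on
    ((hS'.sub (hS.const_mul 2)).intervalIntegrable _ _) (fun x hx => ?_) (by positivity)
  have hlt := two_mul_sin_sq_lt_sin_add_pi_div_four_sq hx.1 hx.2
  have hle := sin_sq_le_one (x + π / 4)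
  have := hsup (sin x ^ 2) ⟨sq_nonneg _, by linarith⟩
  have := hmono ⟨by positivity, by linarith⟩ ⟨sq_nonneg _, hle⟩ hlt
  linarith

theorem antitoneOn_comp_cos_sq_sub_two_mul (hmono : MonotoneOn Δ (Icc 0 1)) :
    AntitoneOn (fun θ => Δ (cos θ ^ 2) - 2 * Δ (sin θ ^ 2)) (Icc 0 (π / 2)) := by
  intro x hx y hy hxy
  have hsin : sin x ^ 2 ≤ sin y ^ 2 :=
    pow_le_pow_left₀ (sin_nonneg_of_nonneg_of_le_pi hx.1 (by linarith [hx.2, pi_pos]))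
      (sin_le_sin_of_le_of_le_pi_div_two (by linarith [hx.1, pi_pos]) hy.2 hxy) 2
  have h₁ := hmono ⟨sq_nonneg _, sin_sq_le_one x⟩ ⟨sq_nonneg _, sin_sq_le_one y⟩ hsin
  have h₂ := hmono ⟨sq_nonneg _, cos_sq_le_one y⟩ ⟨sq_nonneg _, cos_sq_le_one x⟩
    (by rw [cos_sq', cos_sq']; linarith)
  dsimp only
  linarith

theorem integral_cos_two_mul_mul_comp_cos_sq_sub_two_mul_pos (hc : ContinuousOn Δ (Icc 0 1))
    (hmono : StrictMonoOn Δ (Icc 0 1)) (hΔ₀ : Δ 0 = 0)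
    (hsup : ∀ s ∈ Icc (0 : ℝ) (1 / 2), 2 * Δ s ≤ Δ (2 * s)) :
    0 < ∫ θ in 0..π / 4, cos (2 * θ) * (Δ (cos θ ^ 2) - 2 * Δ (sin θ ^ 2)) := by
  have hψc : Continuous fun θ => Δ (cos θ ^ 2) - 2 * Δ (sin θ ^ 2) :=
    (continuous_comp_cos_sq hc).sub ((continuous_comp_sin_sq hc).const_mul 2)
  have hhalf : 0 < Δ (1 / 2) := hΔ₀ ▸ hmono ⟨le_rfl, zero_le_one⟩ (by norm_num) (by norm_num)
  have hψ₀ : 0 < Δ (cos 0 ^ 2) - 2 * Δ (sin 0 ^ 2) := by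
    simpa [hΔ₀] using hmono ⟨le_rfl, zero_le_one⟩ ⟨zero_le_one, le_rfl⟩ zero_lt_one
  have hcos : cos (π / 4) ^ 2 = 1 / 2 := by
    rw [cos_sq, show 2 * (π / 4) = π / 2 by ring, cos_pi_div_two]; ring
  have hψ₁ : Δ (cos (π / 4) ^ 2) - 2 * Δ (sin (π / 4) ^ 2) < 0 := by
    rw [sin_sq, hcos]; norm_num; linarith
  obtain ⟨θ₀, hθ₀, hψθ₀⟩ := intermediate_value_Icc' (by positivity) hψc.continuousOn
    ⟨hψ₁.le, hψ₀.le⟩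
  have hθ₀' : θ₀ < π / 4 := hθ₀.2.lt_of_ne (by rintro rfl; linarith)
  have hw : 0 < cos (2 * θ₀) := cos_pos_of_mem_Ioo ⟨by linarith [hθ₀.1, pi_pos], by linarith⟩
  have hanti : AntitoneOn (fun θ => cos (2 * θ)) (Icc 0 (π / 4)) := fun x hx y hy hxy =>
    cos_le_cos_of_nonneg_of_le_pi (by linarith [hx.1]) (by linarith [hy.2, pi_pos]) (by linarith)
  calc 0 < cos (2 * θ₀) * ∫ θ in 0..π / 4, (Δ (cos θ ^ 2) - 2 * Δ (sin θ ^ 2)) :=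
        mul_pos hw (integral_comp_cos_sq_sub_two_mul_pos hc hmono hsup)
    _ ≤ _ := mul_integral_le_integral_mul_of_antitoneOn (w := fun θ => cos (2 * θ))
        (ψ := fun θ => Δ (cos θ ^ 2) - 2 * Δ (sin θ ^ 2)) hθ₀ hanti
        ((antitoneOn_comp_cos_sq_sub_two_mul hmono.monotoneOn).mono
          (Icc_subset_Icc_right (by linarith [pi_pos])))
        hψθ₀ (hψc.intervalIntegrable _ _) (intervalIntegrable_cos_two_mul_mul hψc _ _)

end Weighted

def invSqrtOneSub (x : ℝ) : ℝ := (√(1 - x))⁻¹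

local notation "φ" => invSqrtOneSub

section InvSqrtOneSub

variable {x : ℝ}

theorem invSqrtOneSub_pos (hx : x < 1) : 0 < φ x :=
  inv_pos.2 (sqrt_pos.2 (sub_pos.2 hx))

theorem invSqrtOneSub_zero : φ 0 = 1 := by simp [invSqrtOneSub]

theorem invSqrtOneSub_half : φ (1 / 2) = √2 := by
  rw [invSqrtOneSub, ← sqrt_inv]; norm_num

theorem strictMonoOn_invSqrtOneSub : StrictMonoOn φ (Iio 1) := by
  intro x hx y hy hxy
  have hy' : 0 < 1 - y := sub_pos.2 hy
  exact inv_strictAnti₀ (sqrt_pos.2 hy') (sqrt_lt_sqrt hy'.le (by linarith))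

theorem hasDerivAt_invSqrtOneSub (hx : x < 1) : HasDerivAt φ (φ x ^ 3 / 2) x := by
  have h : 0 < 1 - x := sub_pos.2 hx
  refine ((((hasDerivAt_id x).const_sub 1).sqrt h.ne').inv (sqrt_pos.2 h).ne').congr_deriv ?_
  simp only [invSqrtOneSub, id]
  field_simp

theorem continuousOn_invSqrtOneSub : ContinuousOn φ (Iio 1) :=
  fun _ hx => (hasDerivAt_invSqrtOneSub hx).continuousAt.continuousWithinAt

end InvSqrtOneSub

section Difference

variable {m m₁ m₂ s : ℝ}

theorem hasDerivAt_invSqrtOneSub_mul (h : m * s < 1) :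
    HasDerivAt (fun s => φ (m * s)) (φ (m * s) ^ 3 / 2 * m) s :=
  (hasDerivAt_invSqrtOneSub h).comp s (hasDerivAt_const_mul m)

theorem continuousOn_invSqrtOneSub_mul (h₀ : 0 ≤ m) (h₁ : m < 1) :
    ContinuousOn (fun s => φ (m * s)) (Icc 0 1) :=
  continuousOn_invSqrtOneSub.comp (continuousOn_const.mul continuousOn_id)
    fun _ hs => mul_lt_one_of_nonneg_of_lt_one_left h₀ h₁ hs.2

theorem strictMonoOn_invSqrtOneSub_mul_sub (h₀ : 0 ≤ m₁) (h₁₂ : m₁ < m₂) (h₂ : m₂ < 1) :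
    StrictMonoOn (fun s => φ (m₂ * s) - φ (m₁ * s)) (Icc 0 1) := by
  refine strictMonoOn_of_deriv_pos (convex_Icc 0 1)
    ((continuousOn_invSqrtOneSub_mul (h₀.trans h₁₂.le) h₂).sub
      (continuousOn_invSqrtOneSub_mul h₀ (h₁₂.trans h₂))) fun s hs => ?_
  rw [interior_Icc] at hs
  have hs₁ : m₁ * s < 1 := mul_lt_one_of_nonneg_of_lt_one_left h₀ (h₁₂.trans h₂) hs.2.le
  have hs₂ : m₂ * s < 1 := mul_lt_one_of_nonneg_of_lt_one_left (h₀.trans h₁₂.le) h₂ hs.2.le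
  rw [((hasDerivAt_invSqrtOneSub_mul hs₂).fun_sub (hasDerivAt_invSqrtOneSub_mul hs₁)).deriv]
  have hpos := invSqrtOneSub_pos hs₁
  have hle : φ (m₁ * s) ≤ φ (m₂ * s) := strictMonoOn_invSqrtOneSub.monotoneOn hs₁ hs₂
    (mul_le_mul_of_nonneg_right h₁₂.le hs.1.le)
  have hcube : φ (m₁ * s) ^ 3 ≤ φ (m₂ * s) ^ 3 := pow_le_pow_left₀ hpos.le hle 3
  nlinarith [pow_pos hpos 3]

theorem monotoneOn_invSqrtOneSub_two_mul_sub :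
    MonotoneOn (fun x => φ (2 * x) - 2 * φ x) (Ico 0 (1 / 2)) := by
  have hderiv : ∀ x ∈ Ico (0 : ℝ) (1 / 2),
      HasDerivAt (fun x => φ (2 * x) - 2 * φ x) (φ (2 * x) ^ 3 - φ x ^ 3) x := fun x hx => by
    refine ((hasDerivAt_invSqrtOneSub_mul (m := 2) (by linarith [hx.2])).fun_sub
      ((hasDerivAt_invSqrtOneSub (by linarith [hx.2])).const_mul 2)).congr_deriv ?_
    ring
  refine monotoneOn_of_deriv_nonneg (convex_Ico 0 (1 / 2))
    (fun x hx => (hderiv x hx).continuousAt.continuousWithinAt)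
    (fun x hx => (hderiv x (interior_subset hx)).differentiableAt.differentiableWithinAt)
    fun x hx => ?_
  rw [interior_Ico] at hx
  rw [(hderiv x (Ioo_subset_Ico_self hx)).deriv, sub_nonneg]
  exact pow_le_pow_left₀ (invSqrtOneSub_pos (by linarith [hx.2])).le
    (strictMonoOn_invSqrtOneSub.monotoneOn (by simp; linarith [hx.2])
      (by simp; linarith [hx.2]) (by linarith [hx.1])) 3

theorem two_mul_invSqrtOneSub_mul_sub_le (h₀ : 0 ≤ m₁) (h₁₂ : m₁ ≤ m₂) (h₂ : m₂ < 1)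
    (hs : s ∈ Icc (0 : ℝ) (1 / 2)) :
    2 * (φ (m₂ * s) - φ (m₁ * s)) ≤ φ (m₂ * (2 * s)) - φ (m₁ * (2 * s)) := by
  have hmem : ∀ m, 0 ≤ m → m < 1 → m * s ∈ Ico (0 : ℝ) (1 / 2) := fun m hm hm' =>
    ⟨mul_nonneg hm hs.1, by nlinarith [hs.1, hs.2]⟩
  have := monotoneOn_invSqrtOneSub_two_mul_sub (hmem m₁ h₀ (h₁₂.trans_lt h₂))
    (hmem m₂ (h₀.trans h₁₂) h₂) (mul_le_mul_of_nonneg_right h₁₂ hs.1)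
  simp only [mul_left_comm _ (2 : ℝ)] at this ⊢
  linarith

end Difference

def gHSin (m : ℝ) : ℝ := ∫ θ in 0..π / 4, cos (2 * θ) * φ (m * sin θ ^ 2)

def gHCos (m : ℝ) : ℝ := ∫ θ in 0..π / 4, cos (2 * θ) * φ (m * cos θ ^ 2)

section gH

variable {m : ℝ}

theorem invSqrtOneSub_le_sqrt_two {x : ℝ} (hx : x ≤ 1 / 2) : φ x ≤ √2 :=
  invSqrtOneSub_half ▸ strictMonoOn_invSqrtOneSub.monotoneOn (hx.trans_lt (by norm_num))
    (by norm_num) hx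

theorem continuous_invSqrtOneSub_mul_sin_sq (h₀ : 0 ≤ m) (h₁ : m < 1) :
    Continuous fun θ => φ (m * sin θ ^ 2) :=
  continuous_comp_sin_sq (continuousOn_invSqrtOneSub_mul h₀ h₁)

theorem continuous_invSqrtOneSub_mul_cos_sq (h₀ : 0 ≤ m) (h₁ : m < 1) :
    Continuous fun θ => φ (m * cos θ ^ 2) :=
  continuous_comp_cos_sq (continuousOn_invSqrtOneSub_mul h₀ h₁)

theorem gH_eq (h₀ : 0 ≤ m) (h₁ : m < 1) : gH m = 4 * gHSin m - 2 * gHCos m := by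
  have hden : ∀ θ, 0 < 1 - m * sin θ ^ 2 := fun θ =>
    sub_pos.2 (mul_lt_one_of_nonneg_of_lt_one_left h₀ h₁ (sin_sq_le_one θ))
  have hf : Continuous fun θ => (1 - 2 * sin θ ^ 2) / √(1 - m * sin θ ^ 2) :=
    (by fun_prop : Continuous _).div (by fun_prop) fun θ => (sqrt_pos.2 (hden θ)).ne'
  have h := integral_comp_sin_sq_eq (f := fun s => (1 - 2 * s) / √(1 - m * s)) hf
  have hsin : ∫ θ in 0..π / 4, (1 - 2 * sin θ ^ 2) / √(1 - m * sin θ ^ 2) = gHSin m :=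
    intervalIntegral.integral_congr fun θ _ => by
      simp only [invSqrtOneSub, ← cos_two_mul_eq_one_sub, div_eq_mul_inv]
  have hcos : ∫ θ in 0..π / 4, (1 - 2 * cos θ ^ 2) / √(1 - m * cos θ ^ 2) = -gHCos m := by
    rw [gHCos, ← intervalIntegral.integral_neg]
    exact intervalIntegral.integral_congr fun θ _ => by
      rw [invSqrtOneSub, cos_two_mul, div_eq_mul_inv]; ring
  rw [gH, h, hsin, hcos]
  ring

theorem continuousOn_gH : ContinuousOn gH (Ico 0 1) := by
  rw [continuousOn_iff_continuous_domRestrict]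
  refine intervalIntegral.continuous_parametric_intervalIntegral_of_continuous'
    (f := fun (m : Ico (0 : ℝ) 1) θ => (1 - 2 * sin θ ^ 2) / √(1 - m * sin θ ^ 2)) ?_ _ _
  refine (by fun_prop : Continuous _).div (by fun_prop) fun p => (sqrt_pos.2 (sub_pos.2 ?_)).ne'
  exact mul_lt_one_of_nonneg_of_lt_one_left p.1.2.1 p.1.2.2 (sin_sq_le_one _)

theorem gH_strictAntiOn : StrictAntiOn gH (Ico 0 1) := by
  intro m₁ h₁ m₂ h₂ h₁₂
  have hpos := integral_cos_two_mul_mul_comp_cos_sq_sub_two_mul_pos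
    (Δ := fun s => φ (m₂ * s) - φ (m₁ * s))
    ((continuousOn_invSqrtOneSub_mul h₂.1 h₂.2).sub (continuousOn_invSqrtOneSub_mul h₁.1 h₁.2))
    (strictMonoOn_invSqrtOneSub_mul_sub h₁.1 h₁₂ h₂.2) (by simp)
    fun s hs => two_mul_invSqrtOneSub_mul_sub_le h₁.1 h₁₂.le h₂.2 hs
  have hS : ∀ {m}, 0 ≤ m → m < 1 →
      IntervalIntegrable (fun θ => cos (2 * θ) * φ (m * sin θ ^ 2)) volume 0 (π / 4) :=
    fun h₀ h₁ => intervalIntegrable_cos_two_mul_mul (continuous_invSqrtOneSub_mul_sin_sq h₀ h₁) _ _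
  have hC : ∀ {m}, 0 ≤ m → m < 1 →
      IntervalIntegrable (fun θ => cos (2 * θ) * φ (m * cos θ ^ 2)) volume 0 (π / 4) :=
    fun h₀ h₁ => intervalIntegrable_cos_two_mul_mul (continuous_invSqrtOneSub_mul_cos_sq h₀ h₁) _ _
  have hlin : ∫ θ in 0..π / 4, cos (2 * θ) * ((φ (m₂ * cos θ ^ 2) - φ (m₁ * cos θ ^ 2)) -
      2 * (φ (m₂ * sin θ ^ 2) - φ (m₁ * sin θ ^ 2))) =
      (gHCos m₂ - gHCos m₁) - 2 * (gHSin m₂ - gHSin m₁) := by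
    simp only [mul_sub, mul_left_comm _ (2 : ℝ)]
    rw [intervalIntegral.integral_sub ((hC h₂.1 h₂.2).sub (hC h₁.1 h₁.2))
        (((hS h₂.1 h₂.2).const_mul 2).sub ((hS h₁.1 h₁.2).const_mul 2)),
      intervalIntegral.integral_sub (hC h₂.1 h₂.2) (hC h₁.1 h₁.2),
      intervalIntegral.integral_sub ((hS h₂.1 h₂.2).const_mul 2) ((hS h₁.1 h₁.2).const_mul 2),
      intervalIntegral.integral_const_mul, intervalIntegral.integral_const_mul, gHCos, gHCos,
      gHSin, gHSin]
  rw [gH_eq h₁.1 h₁.2, gH_eq h₂.1 h₂.2]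
  linarith

theorem half_le_gHSin (h₀ : 0 ≤ m) (h₁ : m < 1) : 1 / 2 ≤ gHSin m := by
  have := le_integral_cos_two_mul_mul (c := 1)
    (intervalIntegrable_cos_two_mul_mul (continuous_invSqrtOneSub_mul_sin_sq h₀ h₁) _ _)
    fun θ _ => invSqrtOneSub_zero ▸ strictMonoOn_invSqrtOneSub.monotoneOn (by norm_num)
      (mul_lt_one_of_nonneg_of_lt_one_left h₀ h₁ (sin_sq_le_one θ)) (by positivity)
  rwa [gHSin]

theorem gHSin_le (h₀ : 0 ≤ m) (h₁ : m < 1) : gHSin m ≤ √2 / 2 :=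
  integral_cos_two_mul_mul_le
    (intervalIntegrable_cos_two_mul_mul (continuous_invSqrtOneSub_mul_sin_sq h₀ h₁) _ _)
    fun _ hθ => invSqrtOneSub_le_sqrt_two <|
      (mul_le_of_le_one_left (sq_nonneg _) h₁.le).trans (sin_sq_le_half hθ)

theorem gHCos_le (h₀ : 0 ≤ m) (h₁ : m ≤ 1 / 2) : gHCos m ≤ √2 / 2 :=
  integral_cos_two_mul_mul_le
    (intervalIntegrable_cos_two_mul_mul
      (continuous_invSqrtOneSub_mul_cos_sq h₀ (h₁.trans_lt (by norm_num))) _ _)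
    fun θ _ => invSqrtOneSub_le_sqrt_two <| (mul_le_of_le_one_right h₀ (cos_sq_le_one θ)).trans h₁

theorem half_mul_cos_div_sin_add_le {δ θ : ℝ} (hδ₀ : 0 < δ) (hδ₁ : δ ≤ 1)
    (hθ : θ ∈ Icc 0 (π / 6)) :
    1 / 2 * (cos θ / (sin θ + δ)) ≤ cos (2 * θ) * φ ((1 - δ ^ 2) * cos θ ^ 2) := by
  have hs : 0 ≤ sin θ := sin_nonneg_of_nonneg_of_le_pi hθ.1 (by linarith [hθ.2, pi_pos])
  have hcos : cos θ / 2 ≤ cos (2 * θ) := by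
    have := cos_le_cos_of_nonneg_of_le_pi (by linarith [hθ.1]) (by linarith [pi_pos])
      (show 2 * θ ≤ π / 3 by linarith [hθ.2])
    rw [cos_pi_div_three] at this
    linarith [cos_le_one θ]
  have hpos : 0 < 1 - (1 - δ ^ 2) * cos θ ^ 2 := sub_pos.2
    (mul_lt_one_of_nonneg_of_lt_one_left (by nlinarith) (by nlinarith) (cos_sq_le_one θ))
  have hden : √(1 - (1 - δ ^ 2) * cos θ ^ 2) ≤ sin θ + δ :=
    (sqrt_le_sqrt (by nlinarith [sin_sq_add_cos_sq θ, cos_sq_le_one θ])).trans_eq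
      (sqrt_sq (by positivity))
  calc 1 / 2 * (cos θ / (sin θ + δ)) = cos θ / 2 * (sin θ + δ)⁻¹ := by ring
    _ ≤ cos (2 * θ) * φ ((1 - δ ^ 2) * cos θ ^ 2) :=
      mul_le_mul hcos (inv_anti₀ (sqrt_pos.2 hpos) hden) (by positivity)
        (cos_two_mul_nonneg ⟨hθ.1, by linarith [hθ.2, pi_pos]⟩)

theorem log_sub_log_div_two_le_gHCos {δ : ℝ} (hδ₀ : 0 < δ) (hδ₁ : δ ≤ 1) :
    (log (1 / 2 + δ) - log δ) / 2 ≤ gHCos (1 - δ ^ 2) := by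
  have h₀ : 0 ≤ 1 - δ ^ 2 := by nlinarith
  have h₁ : 1 - δ ^ 2 < 1 := by nlinarith
  have hi := intervalIntegrable_cos_two_mul_mul (continuous_invSqrtOneSub_mul_cos_sq h₀ h₁)
  calc (log (1 / 2 + δ) - log δ) / 2 = ∫ θ in 0..π / 6, 1 / 2 * (cos θ / (sin θ + δ)) := by
        rw [intervalIntegral.integral_const_mul, integral_cos_div_sin_add hδ₀]; ring
    _ ≤ ∫ θ in 0..π / 6, cos (2 * θ) * φ ((1 - δ ^ 2) * cos θ ^ 2) :=
        intervalIntegral.integral_mono_on (by positivity)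
          ((((continuousOn_cos_div_sin_add hδ₀).mono (Icc_subset_Icc_right
            (by linarith [pi_pos]))).intervalIntegrable_of_Icc (by positivity)).const_mul _)
          (hi _ _) fun θ hθ => half_mul_cos_div_sin_add_le hδ₀ hδ₁ hθ
    _ ≤ gHCos (1 - δ ^ 2) :=
        intervalIntegral.integral_mono_interval le_rfl (by positivity) (by linarith [pi_pos])
          (ae_restrict_of_forall_mem measurableSet_Ioc fun θ hθ =>
            mul_nonneg (cos_two_mul_nonneg (Ioc_subset_Icc_self hθ))
              (invSqrtOneSub_pos (mul_lt_one_of_nonneg_of_lt_one_left h₀ h₁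
                (cos_sq_le_one θ))).le)
          (hi _ _)

theorem gH_half_pos : 0 < gH (1 / 2) := by
  rw [gH_eq (by norm_num) (by norm_num)]
  linarith [half_le_gHSin (m := 1 / 2) (by norm_num) (by norm_num),
    gHCos_le (m := 1 / 2) (by norm_num) le_rfl, sqrt_two_lt_three_halves]

theorem gH_near_one_neg : gH (9999 / 10000) < 0 := by
  have hm : (9999 / 10000 : ℝ) = 1 - (1 / 100) ^ 2 := by norm_num
  have hlog : 3 < log (1 / 2 + 1 / 100) - log (1 / 100) := by
    rw [← log_div (by norm_num) (by norm_num), lt_log_iff_exp_lt (by norm_num),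
      show (3 : ℝ) = (3 : ℕ) by norm_num, ← exp_one_pow]
    calc exp 1 ^ 3 < 3 ^ 3 := pow_lt_pow_left₀ exp_one_lt_three (exp_pos 1).le (by norm_num)
      _ < (1 / 2 + 1 / 100) / (1 / 100) := by norm_num
  rw [gH_eq (by norm_num) (by norm_num)]
  have := log_sub_log_div_two_le_gHCos (δ := 1 / 100) (by norm_num) (by norm_num)
  rw [← hm] at this
  linarith [gHSin_le (m := 9999 / 10000) (by norm_num) (by norm_num), sqrt_two_lt_three_halves]

end gH

/-- Proposition 2.21: the function
`g(m) = ∫_{−π/4}^{5π/4} (1 − 2 sin²θ)(1 − m sin²θ)^{−1/2} dθ` is strictly decreasing on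
`(0,1)` and has a unique zero `m_H ∈ (0,1)`. -/
theorem stmt13 :
    StrictAntiOn gH (Set.Ioo (0:ℝ) 1) ∧
    ∃! mH : ℝ, mH ∈ Set.Ioo (0:ℝ) 1 ∧ gH mH = 0 := by
  have hanti := gH_strictAntiOn.mono Ioo_subset_Ico_self
  obtain ⟨mH, hmH, hzero⟩ := intermediate_value_Icc' (by norm_num : (1 / 2 : ℝ) ≤ 9999 / 10000)
    (continuousOn_gH.mono (Icc_subset_Ico (by norm_num) (by norm_num)))
    ⟨gH_near_one_neg.le, gH_half_pos.le⟩
  have hmH' : mH ∈ Ioo (0 : ℝ) 1 := ⟨by linarith [hmH.1], by linarith [hmH.2]⟩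
  exact ⟨hanti, mH, ⟨hmH', hzero⟩, fun m ⟨hm, hm0⟩ => hanti.injOn hm hmH' (hm0.trans hzero.symm)⟩
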